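/- Let Ω ⊂ ℝ^d be a bounded domain, let J ⊂ (0,∞) be a closed interval, and let p ∈ C²(J) with C = sup_{ξ∈J} |p''(ξ)| < ∞. Let ρ : Ω → J be measurable and bounded, and suppose ρ^ε(x) ∈ J for a.e. x with dist(x,∂Ω) > ε. Then for a.e. such x: |p(ρ^ε(x)) − (p∘ρ)^ε(x)| ≤ C |ρ^ε(x) − ρ(x)|² + C ∫_{B_ε(0)} (ρ(x−y) − ρ(x))² ϱ_ε(y) dy. -/

import Mathlib

open MeasureTheory Metric Filter Topology
open scoped ENNReal NNReal

noncomputable section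

/-- Euclidean space `ℝ^d`. -/
abbrev Euc (d : ℕ) := EuclideanSpace ℝ (Fin d)

variable {d : ℕ} {F : Type*} [NormedAddCommGroup F] [NormedSpace ℝ F]

/-! ### Lebesgue and Besov-type norms on a domain -/

/-- The `L^q` norm of `f` on the set `Ω`. -/
def LqOn (q : ℝ≥0∞) (Ω : Set (Euc d)) (f : Euc d → F) : ℝ≥0∞ :=
  eLpNorm f q (volume.restrict Ω)

/-- `‖f(·-y) - f‖_{L^q(Ω ∩ (Ω+y))}` : the translation-difference norm entering Besov seminorms. -/
def besovDiff (q : ℝ≥0∞) (Ω : Set (Euc d)) (f : Euc d → F) (y : Euc d) : ℝ≥0∞ :=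
  eLpNorm (fun x => f (x - y) - f x) q (volume.restrict (Ω ∩ ((· + y) '' Ω)))

/-- The Besov seminorm `‖f‖_{Ḃ^α_{q,∞}(Ω)} = sup_{y ≠ 0} |y|^{-α} ‖f(·-y)-f‖_{L^q(Ω ∩ (Ω+y))}`. -/
def besovSemi (α : ℝ) (q : ℝ≥0∞) (Ω : Set (Euc d)) (f : Euc d → F) : ℝ≥0∞ :=
  ⨆ (y : Euc d) (_ : y ≠ 0), ENNReal.ofReal (‖y‖ ^ (-α)) * besovDiff q Ω f y

/-- The Besov norm `‖f‖_{B^α_{q,∞}(Ω)} = ‖f‖_{L^q(Ω)} + ‖f‖_{Ḃ^α_{q,∞}(Ω)}`. -/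
def besovNorm (α : ℝ) (q : ℝ≥0∞) (Ω : Set (Euc d)) (f : Euc d → F) : ℝ≥0∞ :=
  LqOn q Ω f + besovSemi α q Ω f

/-- Membership in `B^α_{q,∞}(Ω)`. -/
def MemBesov (α : ℝ) (q : ℝ≥0∞) (Ω : Set (Euc d)) (f : Euc d → F) : Prop :=
  MemLp f q (volume.restrict Ω) ∧ besovSemi α q Ω f < ⊤

/-- Membership in the Onsager critical space `B^α_{q,c(ℕ)}(Ω)`: finite `B^α_{q,∞}` norm together
with `lim_{|y|→0} |y|^{-α} ‖f(·-y)-f‖_{L^q(Ω ∩ (Ω+y))} = 0`. -/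
def MemOnsager (α : ℝ) (q : ℝ≥0∞) (Ω : Set (Euc d)) (f : Euc d → F) : Prop :=
  MemBesov α q Ω f ∧
  Tendsto (fun y : Euc d => ENNReal.ofReal (‖y‖ ^ (-α)) * besovDiff q Ω f y) (𝓝[≠] 0) (𝓝 0)

/-- `( ∫_{Ω'} ⨍_{B_ε(0)} |f(x) - f(x-y)|^q dy dx )^{1/q}` realised as an `L^q` norm with respect to
the product of `volume` on `Ω'` and the normalised volume on the ball `B_ε(0)`. -/
def vmoQuant (q : ℝ≥0∞) (Ω' : Set (Euc d)) (ε : ℝ) (f : Euc d → F) : ℝ≥0∞ :=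
  eLpNorm (fun z : Euc d × Euc d => f z.1 - f (z.1 - z.2)) q
    ((volume.restrict Ω').prod ((volume (ball (0 : Euc d) ε))⁻¹ • volume.restrict (ball (0 : Euc d) ε)))

/-- Membership in the Besov–VMO type space `B̲^α_{q,VMO}(Ω)`: `f ∈ L^q(Ω)` and, for every open
`Ω'` compactly contained in `Ω`, `ε^{-α} (∫_{Ω'} ⨍_{B_ε(0)} |f(x)-f(x-y)|^q dy dx)^{1/q} → 0`. -/
def MemVMO (α : ℝ) (q : ℝ≥0∞) (Ω : Set (Euc d)) (f : Euc d → F) : Prop :=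
  MemLp f q (volume.restrict Ω) ∧
  ∀ Ω' : Set (Euc d), IsOpen Ω' → closure Ω' ⊆ Ω →
    Tendsto (fun ε : ℝ => ENNReal.ofReal (ε ^ (-α)) * vmoQuant q Ω' ε f) (𝓝[>] 0) (𝓝 0)

/-- The `VMO`-type seminorm over a fixed subdomain `Ω'`. -/
def vmoSemiOn (α : ℝ) (q : ℝ≥0∞) (Ω' : Set (Euc d)) (f : Euc d → F) : ℝ≥0∞ :=
  ⨆ (ε : ℝ) (_ : 0 < ε), ENNReal.ofReal (ε ^ (-α)) * vmoQuant q Ω' ε f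

/-! ### Time-dependent (Bochner-type) membership -/

/-- The `L^p(0,T;L^q(Ω))` norm. -/
def LpLqNorm (p q : ℝ≥0∞) (T : ℝ) (Ω : Set (Euc d)) (f : ℝ → Euc d → F) : ℝ≥0∞ :=
  eLpNorm (fun t => (LqOn q Ω (f t)).toReal) p (volume.restrict (Set.Ioo 0 T))

/-- `f ∈ L^p(0,T;L^q(Ω))`. -/
def MemLpLq (p q : ℝ≥0∞) (T : ℝ) (Ω : Set (Euc d)) (f : ℝ → Euc d → F) : Prop :=
  (∀ᵐ t ∂(volume.restrict (Set.Ioo 0 T)), MemLp (f t) q (volume.restrict Ω)) ∧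
  LpLqNorm p q T Ω f < ⊤

/-- `f ∈ L^p(0,T;B^α_{q,∞}(Ω))`. -/
def MemLpBesov (p : ℝ≥0∞) (α : ℝ) (q : ℝ≥0∞) (T : ℝ) (Ω : Set (Euc d))
    (f : ℝ → Euc d → F) : Prop :=
  (∀ᵐ t ∂(volume.restrict (Set.Ioo 0 T)), MemBesov α q Ω (f t)) ∧
  eLpNorm (fun t => (besovNorm α q Ω (f t)).toReal) p (volume.restrict (Set.Ioo 0 T)) < ⊤

/-- `f ∈ L^p(0,T;B^α_{q,c(ℕ)}(Ω))`. -/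
def MemLpOnsager (p : ℝ≥0∞) (α : ℝ) (q : ℝ≥0∞) (T : ℝ) (Ω : Set (Euc d))
    (f : ℝ → Euc d → F) : Prop :=
  (∀ᵐ t ∂(volume.restrict (Set.Ioo 0 T)), MemOnsager α q Ω (f t)) ∧
  eLpNorm (fun t => (besovNorm α q Ω (f t)).toReal) p (volume.restrict (Set.Ioo 0 T)) < ⊤

/-- `f ∈ L^p(0,T;B̲^α_{q,VMO}(Ω))`. -/
def MemLpVMO (p : ℝ≥0∞) (α : ℝ) (q : ℝ≥0∞) (T : ℝ) (Ω : Set (Euc d))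
    (f : ℝ → Euc d → F) : Prop :=
  (∀ᵐ t ∂(volume.restrict (Set.Ioo 0 T)), MemVMO α q Ω (f t)) ∧
  eLpNorm (fun t => (besovNorm α q Ω (f t)).toReal) p (volume.restrict (Set.Ioo 0 T)) < ⊤

/-- `f ∈ L^p(0,T;Ḃ^β_{q,∞}(Ω))` (homogeneous Besov seminorm space). -/
def MemLpBesovDot (p : ℝ≥0∞) (β : ℝ) (q : ℝ≥0∞) (T : ℝ) (Ω : Set (Euc d))
    (f : ℝ → Euc d → F) : Prop :=
  (∀ᵐ t ∂(volume.restrict (Set.Ioo 0 T)), besovSemi β q Ω (f t) < ⊤) ∧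
  eLpNorm (fun t => (besovSemi β q Ω (f t)).toReal) p (volume.restrict (Set.Ioo 0 T)) < ⊤

/-- `f ∈ C([0,T];L^q(Ω))`: continuity in time with respect to the `L^q(Ω)` norm. -/
def ContLq (q : ℝ≥0∞) (T : ℝ) (Ω : Set (Euc d)) (f : ℝ → Euc d → F) : Prop :=
  (∀ t ∈ Set.Icc 0 T, MemLp (f t) q (volume.restrict Ω)) ∧
  ∀ t ∈ Set.Icc 0 T,
    Tendsto (fun s => eLpNorm (fun x => f s x - f t x) q (volume.restrict Ω))
      (𝓝[Set.Icc 0 T] t) (𝓝 0)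

/-! ### Mollification -/

/-- Unnormalised standard bump `e^{-1/(1-|x|²)} 1_{|x|<1}`. -/
def bumpAux (d : ℕ) (x : Euc d) : ℝ := if ‖x‖ < 1 then Real.exp (-(1 - ‖x‖ ^ 2)⁻¹) else 0

/-- Standard mollifier `ϱ`, normalised so that `∫ ϱ = 1`. -/
def stdMoll (d : ℕ) (x : Euc d) : ℝ := (∫ z : Euc d, bumpAux d z)⁻¹ * bumpAux d x

/-- Rescaled mollifier `ϱ_ε(x) = ε^{-d} ϱ(x/ε)`. -/
def stdMollScaled (ε : ℝ) (x : Euc d) : ℝ := (ε ^ d)⁻¹ * stdMoll d (ε⁻¹ • x)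

/-- Mollification `f^ε(x) = ∫_{B_ε(0)} ϱ_ε(y) f(x-y) dy`. -/
def mollify (ε : ℝ) (f : Euc d → F) (x : Euc d) : F :=
  ∫ y in ball (0 : Euc d) ε, stdMollScaled ε y • f (x - y)

/-! ### Geometry of the domain -/

/-- Distance to the boundary `∂Ω`. -/
def bdist (Ω : Set (Euc d)) (x : Euc d) : ℝ := infDist x (frontier Ω)

/-- The boundary layer `Ω_ε = {x ∈ Ω : dist(x,∂Ω) < ε}`. -/
def layer (Ω : Set (Euc d)) (ε : ℝ) : Set (Euc d) := {x ∈ Ω | bdist Ω x < ε}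

/-- The boundary shell `{x ∈ Ω : ε/2 < dist(x,∂Ω) < ε}`. -/
def shell (Ω : Set (Euc d)) (ε : ℝ) : Set (Euc d) :=
  {x ∈ Ω | ε / 2 < bdist Ω x ∧ bdist Ω x < ε}

/-- Data of a `C²` boundary: near the boundary the distance function is `C²`, and `nor x`
(the outward unit normal at the nearest boundary point `σ(x)`) is the negative gradient
of the boundary distance: `∇_x d(x,∂Ω) = -n(σ(x))`, `‖n(σ(x))‖ = 1`. -/
def C2BoundaryData (Ω : Set (Euc 3)) (ε₀ : ℝ) (nor : Euc 3 → Euc 3) : Prop :=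
  0 < ε₀ ∧
  ContDiffOn ℝ 2 (bdist Ω) (layer Ω ε₀) ∧
  ∀ x ∈ layer Ω ε₀, ‖nor x‖ = 1 ∧ HasGradientAt (bdist Ω) (-(nor x)) x

/-! ### Vector calculus in ℝ³ -/

/-- `i`-th coordinate vector of `ℝ³`. -/
def e3 (i : Fin 3) : Euc 3 := EuclideanSpace.single i 1

/-- Interpret a triple of reals as a vector of `ℝ³`. -/
def vec3 (a : Fin 3 → ℝ) : Euc 3 := (WithLp.equiv 2 (Fin 3 → ℝ)).symm a

/-- Partial derivative `∂_i f` of a scalar field. -/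
def pd3 (f : Euc 3 → ℝ) (i : Fin 3) (x : Euc 3) : ℝ := fderiv ℝ f x (e3 i)

/-- Gradient of a scalar field on `ℝ³`. -/
def grad3 (f : Euc 3 → ℝ) (x : Euc 3) : Euc 3 := vec3 fun i => pd3 f i x

/-- Divergence of a vector field on `ℝ³`. -/
def div3 (Ψ : Euc 3 → Euc 3) (x : Euc 3) : ℝ := ∑ i, pd3 (fun y => Ψ y i) i x

/-- Curl of a vector field on `ℝ³`. -/
def curl3 (Ψ : Euc 3 → Euc 3) (x : Euc 3) : Euc 3 :=
  vec3 ![pd3 (fun y => Ψ y 2) 1 x - pd3 (fun y => Ψ y 1) 2 x,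
         pd3 (fun y => Ψ y 0) 2 x - pd3 (fun y => Ψ y 2) 0 x,
         pd3 (fun y => Ψ y 1) 0 x - pd3 (fun y => Ψ y 0) 1 x]

/-- Cross product on `ℝ³`. -/
def cross3 (a b : Euc 3) : Euc 3 :=
  vec3 ![a 1 * b 2 - a 2 * b 1, a 2 * b 0 - a 0 * b 2, a 0 * b 1 - a 1 * b 0]

/-- Dot product on `ℝ³`. -/
def dot3 (a b : Euc 3) : ℝ := ∑ i, a i * b i

/-! ### Test functions and weak solutions -/

/-- Test function in `C_c^∞(Ω)`. -/
def IsTestS (Ω : Set (Euc 3)) (φ : Euc 3 → F) : Prop :=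
  ContDiff ℝ (⊤ : ℕ∞) φ ∧ HasCompactSupport φ ∧ tsupport φ ⊆ Ω

/-- Test function in `C_c^∞((0,T) × Ω)`. -/
def IsTestST (T : ℝ) (Ω : Set (Euc 3)) (Φ : ℝ → Euc 3 → F) : Prop :=
  ContDiff ℝ (⊤ : ℕ∞) (Function.uncurry Φ) ∧ HasCompactSupport (Function.uncurry Φ) ∧
  tsupport (Function.uncurry Φ) ⊆ Set.Ioo 0 T ×ˢ Ω

/-- `P(r) = ∫₁^r p'(s)/s ds`. -/
def Pfun (p : ℝ → ℝ) (r : ℝ) : ℝ := ∫ s in (1:ℝ)..r, deriv p s / s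

/-- `G(r) = r ∫₁^r p(s)/s² ds`. -/
def Gfun (p : ℝ → ℝ) (r : ℝ) : ℝ := r * ∫ s in (1:ℝ)..r, p s / s ^ 2

/-- Weak solution of the compressible Euler equations on `(0,T) × Ω`
(mass and momentum equations in the sense of distributions, energy inequality,
and regularity of the pressure law). -/
structure WeakSolCE (T : ℝ) (Ω : Set (Euc 3)) (p : ℝ → ℝ)
    (ρ : ℝ → Euc 3 → ℝ) (v : ℝ → Euc 3 → Euc 3) : Prop where
  press_cont : ContinuousOn p (Set.Ici 0)
  press_C2 : ContDiffOn ℝ 2 p (Set.Ioi 0)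
  mass : ∀ Φ : ℝ → Euc 3 → ℝ, IsTestST T Ω Φ →
    (∫ t in Set.Ioo 0 T, ∫ x in Ω,
      (ρ t x * deriv (fun s => Φ s x) t + ρ t x * dot3 (v t x) (grad3 (Φ t) x))) = 0
  momentum : ∀ Ψ : ℝ → Euc 3 → Euc 3, IsTestST T Ω Ψ →
    (∫ t in Set.Ioo 0 T, ∫ x in Ω,
      (ρ t x * dot3 (v t x) (deriv (fun s => Ψ s x) t)
        + (∑ i, ∑ j, ρ t x * v t x i * v t x j * pd3 (fun y => Ψ t y i) j x)
        + p (ρ t x) * div3 (Ψ t) x)) = 0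
  energy : ∀ t ∈ Set.Ioo 0 T,
    (∫ x in Ω, ((2:ℝ)⁻¹ * ρ t x * ‖v t x‖ ^ 2 + Gfun p (ρ t x)))
      ≤ ∫ x in Ω, ((2:ℝ)⁻¹ * ρ 0 x * ‖v 0 x‖ ^ 2 + Gfun p (ρ 0 x))

/-- Weak solution of the incompressible Euler equations on `(0,T) × Ω` with pressure `pr`. -/
structure WeakSolIE (T : ℝ) (Ω : Set (Euc 3)) (v : ℝ → Euc 3 → Euc 3)
    (pr : ℝ → Euc 3 → ℝ) : Prop where
  divfree : ∀ᵐ t ∂(volume.restrict (Set.Ioo 0 T)), ∀ φ : Euc 3 → ℝ, IsTestS Ω φ →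
    (∫ x in Ω, dot3 (v t x) (grad3 φ x)) = 0
  momentum : ∀ Ψ : ℝ → Euc 3 → Euc 3, IsTestST T Ω Ψ →
    (∫ t in Set.Ioo 0 T, ∫ x in Ω,
      (dot3 (v t x) (deriv (fun s => Ψ s x) t)
        + (∑ i, ∑ j, v t x i * v t x j * pd3 (fun y => Ψ t y i) j x)
        + pr t x * div3 (Ψ t) x)) = 0

/-- `ω = curl v` in the sense of distributions: for a.e. `t`,
`∫_Ω ω·φ = ∫_Ω v·curl φ` for all `φ ∈ C_c^∞(Ω;ℝ³)`. -/
def IsVorticity (T : ℝ) (Ω : Set (Euc 3)) (v ω : ℝ → Euc 3 → Euc 3) : Prop :=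
  ∀ᵐ t ∂(volume.restrict (Set.Ioo 0 T)), ∀ φ : Euc 3 → Euc 3, IsTestS Ω φ →
    (∫ x in Ω, dot3 (ω t x) (φ x)) = ∫ x in Ω, dot3 (v t x) (curl3 φ x)

/-- The product measure on `(0,T) × Ω`. -/
def prodTΩ (T : ℝ) (Ω : Set (Euc 3)) : Measure (ℝ × Euc 3) :=
  (volume.restrict (Set.Ioo 0 T)).prod (volume.restrict Ω)

/-- The near-vacuum integrability conditions:
`ρ⁻¹ 1_{ρ≤δ} ∈ L^{r₁}((0,T)×Ω)`, `(∂_t ρ) 1_{ρ≤δ} ∈ L^{r₂}((0,T)×Ω)`,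
`(∇ρ) 1_{ρ≤δ} ∈ L^{r₃}((0,T)×Ω)`. -/
def VacuumCond (T : ℝ) (Ω : Set (Euc 3)) (ρ : ℝ → Euc 3 → ℝ)
    (δ : ℝ) (r₁ r₂ r₃ : ℝ≥0∞) : Prop :=
  MemLp (Set.indicator {z : ℝ × Euc 3 | ρ z.1 z.2 ≤ δ} fun z => (ρ z.1 z.2)⁻¹)
    r₁ (prodTΩ T Ω) ∧
  MemLp (Set.indicator {z : ℝ × Euc 3 | ρ z.1 z.2 ≤ δ} fun z => deriv (fun s => ρ s z.2) z.1)
    r₂ (prodTΩ T Ω) ∧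
  MemLp (Set.indicator {z : ℝ × Euc 3 | ρ z.1 z.2 ≤ δ} fun z => grad3 (ρ z.1) z.2)
    r₃ (prodTΩ T Ω)

end

noncomputable section MollHelpers

variable {d : ℕ}

theorem bumpAux_eq (x : Euc d) : bumpAux d x = expNegInvGlue (1 - ‖x‖ ^ 2) := by
  unfold bumpAux expNegInvGlue
  rcases lt_or_ge ‖x‖ 1 with h | h
  · rw [if_pos h, if_neg]
    nlinarith [norm_nonneg x]
  · rw [if_neg (not_lt.2 h), if_pos]
    nlinarith [norm_nonneg x]

theorem bumpAux_nonneg (x : Euc d) : 0 ≤ bumpAux d x := by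
  rw [bumpAux_eq]; exact expNegInvGlue.nonneg _

theorem bumpAux_continuous : Continuous (bumpAux d) := by
  have : Continuous fun x : Euc d => expNegInvGlue (1 - ‖x‖ ^ 2) :=
    (expNegInvGlue.contDiff (n := (⊤ : ℕ∞))).continuous.comp
      (continuous_const.sub (continuous_norm.pow 2))
  exact this.congr fun x => (bumpAux_eq x).symm

theorem bumpAux_zero_of_one_le {x : Euc d} (h : 1 ≤ ‖x‖) : bumpAux d x = 0 := by
  rw [bumpAux_eq, expNegInvGlue.zero_of_nonpos]
  nlinarith [norm_nonneg x]

theorem bumpAux_hasCompactSupport : HasCompactSupport (bumpAux d) := by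
  apply HasCompactSupport.intro (isCompact_closedBall (0 : Euc d) 1)
  intro x hx
  exact bumpAux_zero_of_one_le (le_of_lt (by simpa [Metric.closedBall, dist_eq_norm] using hx))

theorem bumpAux_integrable : MeasureTheory.Integrable (bumpAux d) := by
  exact bumpAux_continuous.integrable_of_hasCompactSupport bumpAux_hasCompactSupport

theorem bumpAux_integral_pos : 0 < ∫ x : Euc d, bumpAux d x := by
  rw [MeasureTheory.integral_pos_iff_support_of_nonneg bumpAux_nonneg bumpAux_integrable]
  have hsub : ball (0 : Euc d) 1 ⊆ Function.support (bumpAux d) := by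
    intro x hx
    have hx' : 0 < 1 - ‖x‖ ^ 2 := by
      have : ‖x‖ < 1 := by simpa [dist_eq_norm] using hx
      nlinarith [norm_nonneg x]
    rw [Function.mem_support, bumpAux_eq]
    exact (expNegInvGlue.pos_of_pos hx').ne'
  exact lt_of_lt_of_le (measure_ball_pos _ _ one_pos) (measure_mono hsub)

theorem stdMoll_integral : ∫ x : Euc d, stdMoll d x = 1 := by
  unfold stdMoll
  rw [MeasureTheory.integral_const_mul]
  exact inv_mul_cancel₀ bumpAux_integral_pos.ne'

theorem stdMoll_nonneg (x : Euc d) : 0 ≤ stdMoll d x :=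
  mul_nonneg (inv_nonneg.2 bumpAux_integral_pos.le) (bumpAux_nonneg x)

theorem stdMollScaled_nonneg (ε : ℝ) (hε : 0 < ε) (y : Euc d) : 0 ≤ stdMollScaled ε y :=
  mul_nonneg (inv_nonneg.2 (pow_nonneg hε.le _)) (stdMoll_nonneg _)

theorem stdMollScaled_continuous (ε : ℝ) : Continuous (stdMollScaled (d := d) ε) := by
  unfold stdMollScaled stdMoll
  exact continuous_const.mul (continuous_const.mul
    (bumpAux_continuous.comp (continuous_const_smul _)))

theorem stdMollScaled_zero_of_le {ε : ℝ} (hε : 0 < ε) {y : Euc d} (h : ε ≤ ‖y‖) :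
    stdMollScaled ε y = 0 := by
  unfold stdMollScaled stdMoll
  rw [bumpAux_zero_of_one_le, mul_zero, mul_zero]
  rw [norm_smul, norm_inv, Real.norm_eq_abs, abs_of_pos hε, le_inv_mul_iff₀ hε, mul_one]
  exact h

theorem stdMollScaled_integral {ε : ℝ} (hε : 0 < ε) :
    ∫ y in ball (0 : Euc d) ε, stdMollScaled ε y = 1 := by
  rw [MeasureTheory.setIntegral_eq_integral_of_forall_compl_eq_zero
    (fun y hy => stdMollScaled_zero_of_le hε (by simpa [dist_eq_norm] using hy))]
  unfold stdMollScaled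
  rw [MeasureTheory.integral_const_mul]
  rw [MeasureTheory.Measure.integral_comp_inv_smul_of_nonneg MeasureTheory.volume (stdMoll d) hε.le]
  rw [finrank_euclideanSpace_fin, stdMoll_integral, smul_eq_mul, mul_one,
    inv_mul_cancel₀ (pow_ne_zero _ hε.ne')]

end MollHelpers

section TaylorHelpers

theorem ball_subset_of_lt_bdist {d : ℕ} {Ω : Set (Euc d)} (hΩo : IsOpen Ω) {x : Euc d}
    (hx : x ∈ Ω) {ε : ℝ} (hε : ε < bdist Ω x) : ball x ε ⊆ Ω := by
  rcases le_or_gt ε 0 with h0 | h0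
  · simp [Metric.ball_eq_empty.2 h0]
  have h1 : ball x ε ⊆ (frontier Ω)ᶜ :=
    (Metric.ball_subset_ball hε.le).trans Metric.ball_infDist_subset_compl
  have h2 : ball x ε ⊆ interior Ω ∪ interior Ωᶜ := by
    rwa [← compl_frontier_eq_union_interior]
  have h3 : ball x ε ⊆ interior Ω := by
    refine (convex_ball x ε).isPreconnected.subset_left_of_subset_union isOpen_interior
      isOpen_interior ?_ h2 ⟨x, Metric.mem_ball_self h0, ?_⟩
    · exact (disjoint_compl_right (a := Ω)).mono interior_subset interior_subset
    · rwa [hΩo.interior_eq]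
  exact h3.trans interior_subset

theorem taylor_est {a b : ℝ} (hab : a ≤ b) {p : ℝ → ℝ} (hp : ContDiffOn ℝ 2 p (Set.Icc a b))
    {ξ η : ℝ} (hξ : ξ ∈ Set.Icc a b) (hη : η ∈ Set.Icc a b) :
    |p η - p ξ - derivWithin p (Set.Icc a b) ξ * (η - ξ)| ≤
      sSup ((fun t => |deriv (deriv p) t|) '' Set.Icc a b) * (η - ξ) ^ 2 := by
  set C := sSup ((fun t => |deriv (deriv p) t|) '' Set.Icc a b) with hCdef
  have hC0 : 0 ≤ C := Real.sSup_nonneg (by rintro y ⟨t, _, rfl⟩; positivity)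
  rcases eq_or_lt_of_le hab with rfl | hlt
  · obtain rfl : ξ = a := le_antisymm hξ.2 hξ.1
    obtain rfl : η = ξ := le_antisymm hη.2 hη.1
    simp [hC0]
  set s := Set.Icc a b with hsdef
  have hs : UniqueDiffOn ℝ s := uniqueDiffOn_Icc hlt
  set g := derivWithin p s with hgdef
  set g2 := derivWithin g s with hg2def
  have hpg : ∀ t ∈ s, HasDerivWithinAt p (g t) s t := fun t ht =>
    ((hp.differentiableOn (by norm_num)) t ht).hasDerivWithinAt
  have hgC1 : ContDiffOn ℝ 1 g s := hp.derivWithin hs (by norm_num)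
  have hgg2 : ∀ t ∈ s, HasDerivWithinAt g (g2 t) s t := fun t ht =>
    ((hgC1.differentiableOn one_ne_zero) t ht).hasDerivWithinAt
  have hg2cont : ContinuousOn g2 s := hgC1.continuousOn_derivWithin hs le_rfl
  have hmem : ∀ t ∈ Set.Ioo a b, deriv (deriv p) t = g2 t := by
    intro t ht
    have hnb : s ∈ 𝓝 t := Icc_mem_nhds ht.1 ht.2
    have h1 : deriv (deriv p) t = deriv g t := by
      refine Filter.EventuallyEq.deriv_eq ?_
      filter_upwards [isOpen_Ioo.mem_nhds ht] with u hu
      exact (derivWithin_of_mem_nhds (Icc_mem_nhds hu.1 hu.2)).symm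
    rw [h1, hg2def, derivWithin_of_mem_nhds hnb]
  have hCle : ∀ t ∈ Set.Ioo a b, |g2 t| ≤ C := by
    intro t ht
    have hbdd : BddAbove ((fun t => |deriv (deriv p) t|) '' Set.Icc a b) := by
      obtain ⟨M, hM⟩ := isCompact_Icc.exists_bound_of_continuousOn hg2cont
      refine ⟨max M (max |deriv (deriv p) a| |deriv (deriv p) b|), ?_⟩
      rintro y ⟨u, hu, rfl⟩
      rcases eq_or_lt_of_le hu.1 with rfl | h1
      · exact le_max_of_le_right (le_max_left _ _)
      rcases eq_or_lt_of_le hu.2 with rfl | h2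
      · exact le_max_of_le_right (le_max_right _ _)
      · show |deriv (deriv p) u| ≤ _
        rw [hmem u ⟨h1, h2⟩]
        exact le_max_of_le_left (by simpa using hM u hu)
    rw [← hmem t ht]
    exact le_csSup hbdd ⟨t, Set.mem_of_mem_of_subset ht Set.Ioo_subset_Icc_self, rfl⟩
  have hC : ∀ t ∈ s, |g2 t| ≤ C := by
    have hend : ∀ t ∈ s, (𝓝[Set.Ioo a b] t).NeBot → |g2 t| ≤ C := by
      intro t ht hne
      have htend : Filter.Tendsto (fun u => |g2 u|) (𝓝[Set.Ioo a b] t) (𝓝 |g2 t|) :=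
        continuous_abs.continuousAt.tendsto.comp
          (((hg2cont t ht).tendsto).mono_left (nhdsWithin_mono _ Set.Ioo_subset_Icc_self))
      exact le_of_tendsto htend
        (by filter_upwards [self_mem_nhdsWithin] with u hu using hCle u hu)
    intro t ht
    rcases eq_or_lt_of_le ht.1 with h1 | h1
    · exact hend t ht (by rw [← h1]; exact left_nhdsWithin_Ioo_neBot hlt)
    rcases eq_or_lt_of_le ht.2 with h2 | h2
    · exact hend t ht (by rw [h2]; exact right_nhdsWithin_Ioo_neBot hlt)
    · exact hCle t ⟨h1, h2⟩
  have hLip : ∀ u ∈ s, ∀ v ∈ s, |g v - g u| ≤ C * |v - u| := fun u hu v hv => by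
    simpa [Real.norm_eq_abs] using
      (convex_Icc a b).norm_image_sub_le_of_norm_hasDerivWithin_le hgg2
        (fun t ht => by simpa [Real.norm_eq_abs] using hC t ht) hu hv
  -- Taylor step on uIcc ξ η
  have husub : Set.uIcc ξ η ⊆ s := by
    rw [hsdef, ← Set.uIcc_of_le hab]
    exact Set.uIcc_subset_uIcc (by rw [Set.uIcc_of_le hab]; exact hξ)
      (by rw [Set.uIcc_of_le hab]; exact hη)
  set q := fun t => p t - g ξ * t with hqdef
  have hq : ∀ t ∈ Set.uIcc ξ η, HasDerivWithinAt q (g t - g ξ) (Set.uIcc ξ η) t := by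
    intro t ht
    have h1 : HasDerivWithinAt (fun t => g ξ * t) (g ξ) (Set.uIcc ξ η) t := by
      simpa using (hasDerivWithinAt_id t (Set.uIcc ξ η)).const_mul (g ξ)
    exact ((hpg t (husub ht)).mono husub).sub h1
  have hbound : ∀ t ∈ Set.uIcc ξ η, ‖g t - g ξ‖ ≤ C * |η - ξ| := by
    intro t ht
    rw [Real.norm_eq_abs]
    refine (hLip ξ (husub Set.left_mem_uIcc) t (husub ht)).trans ?_
    exact mul_le_mul_of_nonneg_left (Set.abs_sub_left_of_mem_uIcc ht) hC0
  have hfin := (convex_uIcc ξ η).norm_image_sub_le_of_norm_hasDerivWithin_le hq hbound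
    Set.left_mem_uIcc Set.right_mem_uIcc
  rw [Real.norm_eq_abs, Real.norm_eq_abs] at hfin
  have heq : q η - q ξ = p η - p ξ - g ξ * (η - ξ) := by rw [hqdef]; ring
  rw [heq] at hfin
  calc |p η - p ξ - g ξ * (η - ξ)| ≤ C * |η - ξ| * |η - ξ| := hfin
    _ = C * (η - ξ) ^ 2 := by rw [mul_assoc, abs_mul_abs_self]; ring

end TaylorHelpers

section IntHelpers

theorem integrableOn_moll {d : ℕ} {ε : ℝ} (hε : 0 < ε) {G : Euc d → ℝ} (hG : Measurable G)
    {M : ℝ} (hM : ∀ y ∈ ball (0 : Euc d) ε, |G y| ≤ M) :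
    MeasureTheory.IntegrableOn (fun y => stdMollScaled ε y * G y) (ball (0 : Euc d) ε) := by
  obtain ⟨K, hK⟩ := (isCompact_closedBall (0 : Euc d) ε).exists_bound_of_continuousOn
    (stdMollScaled_continuous ε).continuousOn
  haveI : MeasureTheory.IsFiniteMeasure
      (MeasureTheory.volume.restrict (ball (0 : Euc d) ε)) :=
    ⟨by rw [MeasureTheory.Measure.restrict_apply_univ]; exact measure_ball_lt_top⟩
  constructor
  · exact (((stdMollScaled_continuous ε).measurable.mul hG)).aestronglyMeasurable
  · apply MeasureTheory.HasFiniteIntegral.of_bounded (C := K * M)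
    rw [MeasureTheory.ae_restrict_iff' measurableSet_ball]
    refine MeasureTheory.ae_of_all _ fun y hy => ?_
    have h1 : |stdMollScaled ε y| ≤ K := by
      simpa using hK y (ball_subset_closedBall hy)
    have h2 : |G y| ≤ M := hM y hy
    rw [Real.norm_eq_abs, abs_mul]
    exact mul_le_mul h1 h2 (abs_nonneg _) (le_trans (abs_nonneg _) h1)

end IntHelpers

/-- Taylor-expansion estimate for the mollified pressure. -/
theorem stmt17 {d : ℕ} (Ω : Set (Euc d))
    (hΩo : IsOpen Ω) (hΩb : Bornology.IsBounded Ω) (hΩconn : IsConnected Ω)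
    (a b : ℝ) (ha : 0 < a) (hab : a ≤ b)
    (p : ℝ → ℝ) (hp : ContDiffOn ℝ 2 p (Set.Icc a b))
    (ρ : Euc d → ℝ) (hρm : Measurable ρ) (hρJ : ∀ x ∈ Ω, ρ x ∈ Set.Icc a b)
    (ε : ℝ) (hε : 0 < ε)
    (hρε : ∀ x ∈ Ω, ε < bdist Ω x → mollify ε ρ x ∈ Set.Icc a b) :
    ∀ᵐ x ∂(volume.restrict {x ∈ Ω | ε < bdist Ω x}),
      |p (mollify ε ρ x) - mollify ε (fun y => p (ρ y)) x| ≤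
        sSup ((fun ξ => |deriv (deriv p) ξ|) '' Set.Icc a b) * (mollify ε ρ x - ρ x) ^ 2
        + sSup ((fun ξ => |deriv (deriv p) ξ|) '' Set.Icc a b) *
            ∫ y in ball (0 : Euc d) ε, stdMollScaled ε y * (ρ (x - y) - ρ x) ^ 2 := by
  set C := sSup ((fun ξ => |deriv (deriv p) ξ|) '' Set.Icc a b) with hCdef
  have hmeas : MeasurableSet {x ∈ Ω | ε < bdist Ω x} := by
    have : {x ∈ Ω | ε < bdist Ω x} = Ω ∩ (bdist Ω ⁻¹' Set.Ioi ε) := rfl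
    rw [this]
    exact hΩo.measurableSet.inter
      ((continuous_infDist_pt (frontier Ω)).measurable measurableSet_Ioi)
  rw [MeasureTheory.ae_restrict_iff' hmeas]
  refine MeasureTheory.ae_of_all _ ?_
  rintro x ⟨hxΩ, hxd⟩
  have hball : ball x ε ⊆ Ω := ball_subset_of_lt_bdist hΩo hxΩ hxd
  have hρxy : ∀ y ∈ ball (0 : Euc d) ε, ρ (x - y) ∈ Set.Icc a b := by
    intro y hy
    refine hρJ _ (hball ?_)
    have : dist (x - y) x = ‖y‖ := by simp [dist_eq_norm]
    rw [mem_ball, this]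
    simpa [dist_eq_norm] using hy
  set ξ := ρ x with hξdef
  have hξJ : ξ ∈ Set.Icc a b := hρJ x hxΩ
  set g := derivWithin p (Set.Icc a b) with hgdef
  set φ := stdMollScaled (d := d) ε with hφdef
  set B := ball (0 : Euc d) ε with hBdef
  set P : ℝ → ℝ := fun t => p (min b (max a t)) with hPdef
  have hPcont : Continuous P := by
    refine hp.continuousOn.comp_continuous
      (continuous_const.min (continuous_const.max continuous_id)) fun t => ?_
    exact ⟨le_min hab (le_max_left _ _), min_le_left _ _⟩
  have hPeq : ∀ t ∈ Set.Icc a b, P t = p t := by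
    intro t ht
    rw [hPdef]
    simp only
    rw [max_eq_right ht.1, min_eq_right ht.2]
  obtain ⟨M, hM⟩ := isCompact_Icc.exists_bound_of_continuousOn hp.continuousOn
  have hmeasρ : Measurable fun y : Euc d => ρ (x - y) :=
    hρm.comp (measurable_const.sub measurable_id)
  have habs : ∀ t ∈ Set.Icc a b, |t| ≤ max |a| |b| := by
    intro t ht
    rw [abs_le]
    constructor
    · have := neg_abs_le a; have := le_max_left |a| |b|; linarith [ht.1]
    · have := le_abs_self b; have := le_max_right |a| |b|; linarith [ht.2]
  have hb0 : MeasureTheory.IntegrableOn φ B := by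
    have := integrableOn_moll (d := d) hε (G := fun _ => (1 : ℝ)) measurable_const
      (M := 1) (fun y _ => by simp)
    simpa using this
  have hb1 : MeasureTheory.IntegrableOn (fun y => φ y * ρ (x - y)) B :=
    integrableOn_moll hε hmeasρ (M := max |a| |b|) fun y hy => habs _ (hρxy y hy)
  have hb2 : MeasureTheory.IntegrableOn (fun y => φ y * P (ρ (x - y))) B := by
    refine integrableOn_moll hε (G := fun y => P (ρ (x - y)))
      (hPcont.measurable.comp hmeasρ) (M := M) fun y hy => ?_
    show |P (ρ (x - y))| ≤ M
    rw [hPeq _ (hρxy y hy)]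
    simpa using hM _ (hρxy y hy)
  have hb3 : MeasureTheory.IntegrableOn (fun y => φ y * (ρ (x - y) - ξ) ^ 2) B := by
    refine integrableOn_moll hε ((hmeasρ.sub measurable_const).pow_const 2)
      (M := (b - a) ^ 2) fun y hy => ?_
    have h1 := hρxy y hy
    rw [abs_le]
    constructor <;> nlinarith [h1.1, h1.2, hξJ.1, hξJ.2]
  have hint0 : ∫ y in B, φ y = 1 := stdMollScaled_integral hε
  have hmρ : mollify ε ρ x = ∫ y in B, φ y * ρ (x - y) := by
    unfold mollify
    simp only [smul_eq_mul, hφdef, hBdef]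
  have hmp : mollify ε (fun z => p (ρ z)) x = ∫ y in B, φ y * P (ρ (x - y)) := by
    unfold mollify
    simp only [smul_eq_mul, hφdef, hBdef]
    refine MeasureTheory.setIntegral_congr_fun measurableSet_ball fun y hy => ?_
    rw [hPeq _ (hρxy y hy)]
  have key : mollify ε (fun z => p (ρ z)) x - p ξ - g ξ * (mollify ε ρ x - ξ)
      = ∫ y in B, φ y * (P (ρ (x - y)) - p ξ - g ξ * (ρ (x - y) - ξ)) := by
    rw [hmp, hmρ]
    have hre : (fun y => φ y * (P (ρ (x - y)) - p ξ - g ξ * (ρ (x - y) - ξ)))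
        = fun y => φ y * P (ρ (x - y)) - p ξ * φ y - g ξ * (φ y * ρ (x - y))
            + (g ξ * ξ) * φ y := funext fun y => by ring
    have i4 : MeasureTheory.Integrable (fun y => (g ξ * ξ) * φ y)
        (volume.restrict B) := hb0.const_mul _
    have i3 : MeasureTheory.Integrable (fun y => p ξ * φ y)
        (volume.restrict B) := hb0.const_mul _
    have i2 : MeasureTheory.Integrable (fun y => g ξ * (φ y * ρ (x - y)))
        (volume.restrict B) := hb1.const_mul _
    have i1 : MeasureTheory.Integrable (fun y => φ y * P (ρ (x - y)) - p ξ * φ y)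
        (volume.restrict B) := by exact hb2.sub i3
    have i0 : MeasureTheory.Integrable
        (fun y => φ y * P (ρ (x - y)) - p ξ * φ y - g ξ * (φ y * ρ (x - y)))
        (volume.restrict B) := by exact i1.sub i2
    rw [hre, MeasureTheory.integral_add i0 i4, MeasureTheory.integral_sub i1 i2,
      MeasureTheory.integral_sub hb2 i3,
      MeasureTheory.integral_const_mul, MeasureTheory.integral_const_mul,
      MeasureTheory.integral_const_mul, hint0]
    ring
  have h1 : |p (mollify ε ρ x) - p ξ - g ξ * (mollify ε ρ x - ξ)|
      ≤ C * (mollify ε ρ x - ξ) ^ 2 := taylor_est hab hp hξJ (hρε x hxΩ hxd)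
  have h2 : |∫ y in B, φ y * (P (ρ (x - y)) - p ξ - g ξ * (ρ (x - y) - ξ))|
      ≤ C * ∫ y in B, φ y * (ρ (x - y) - ξ) ^ 2 := by
    have i5 : MeasureTheory.IntegrableOn
        (fun y => φ y * (P (ρ (x - y)) - p ξ - g ξ * (ρ (x - y) - ξ))) B := by
      have hre : (fun y => φ y * (P (ρ (x - y)) - p ξ - g ξ * (ρ (x - y) - ξ)))
          = fun y => φ y * P (ρ (x - y)) - p ξ * φ y - g ξ * (φ y * ρ (x - y))
              + (g ξ * ξ) * φ y := funext fun y => by ring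
      rw [hre]
      exact (((hb2.sub (hb0.const_mul (p ξ))).sub (hb1.const_mul (g ξ))).add
          (hb0.const_mul (g ξ * ξ)))
    rw [show C * ∫ y in B, φ y * (ρ (x - y) - ξ) ^ 2
        = ∫ y in B, C * (φ y * (ρ (x - y) - ξ) ^ 2) from
      (MeasureTheory.integral_const_mul C _).symm]
    have hni := MeasureTheory.norm_integral_le_integral_norm (μ := volume.restrict B)
      (f := fun y => φ y * (P (ρ (x - y)) - p ξ - g ξ * (ρ (x - y) - ξ)))
    simp_rw [Real.norm_eq_abs] at hni
    refine hni.trans ?_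
    refine MeasureTheory.setIntegral_mono_on i5.abs (hb3.const_mul C)
      measurableSet_ball fun y hy => ?_
    have hφ0 : 0 ≤ φ y := stdMollScaled_nonneg ε hε y
    have htay : |P (ρ (x - y)) - p ξ - g ξ * (ρ (x - y) - ξ)|
        ≤ C * (ρ (x - y) - ξ) ^ 2 := by
      rw [hPeq _ (hρxy y hy)]
      exact taylor_est hab hp hξJ (hρxy y hy)
    calc |φ y * (P (ρ (x - y)) - p ξ - g ξ * (ρ (x - y) - ξ))|
        = φ y * |P (ρ (x - y)) - p ξ - g ξ * (ρ (x - y) - ξ)| := by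
          rw [abs_mul, abs_of_nonneg hφ0]
      _ ≤ φ y * (C * (ρ (x - y) - ξ) ^ 2) := mul_le_mul_of_nonneg_left htay hφ0
      _ = C * (φ y * (ρ (x - y) - ξ) ^ 2) := by ring
  have hsplit : p (mollify ε ρ x) - mollify ε (fun z => p (ρ z)) x
      = (p (mollify ε ρ x) - p ξ - g ξ * (mollify ε ρ x - ξ))
        - (mollify ε (fun z => p (ρ z)) x - p ξ - g ξ * (mollify ε ρ x - ξ)) := by ring
  calc |p (mollify ε ρ x) - mollify ε (fun z => p (ρ z)) x|
      ≤ |p (mollify ε ρ x) - p ξ - g ξ * (mollify ε ρ x - ξ)|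
        + |mollify ε (fun z => p (ρ z)) x - p ξ - g ξ * (mollify ε ρ x - ξ)| := by
        rw [hsplit]; exact abs_sub _ _
    _ ≤ C * (mollify ε ρ x - ξ) ^ 2 + C * ∫ y in B, φ y * (ρ (x - y) - ξ) ^ 2 := by
        refine add_le_add h1 ?_
        rw [key]
        exact h2
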